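/- Every Sahlqvist formula is semantically equivalent (true at the same states in the same models) to the negation of a Sahlqvist antecedent, and hence to a Sahlqvist implication. -/
import Mathlib


inductive MF : Type where
  | bot
  | top
  | var (p : Nat)
  | neg (φ : MF)
  | or (φ ψ : MF)
  | and (φ ψ : MF)
  | dia (φ : MF)
  | box (φ : MF)

/-- Implication, defined as usual. -/
def MF.imp (φ ψ : MF) : MF := MF.or (MF.neg φ) ψ

/-- Kripke satisfaction: truth of a modal formula at a world. -/
def sat {W : Type} (R : W → W → Prop) (V : Nat → Set W) : MF → W → Prop
  | .bot, _ => False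
  | .top, _ => True
  | .var p, w => w ∈ V p
  | .neg φ, w => ¬ sat R V φ w
  | .or φ ψ, w => sat R V φ w ∨ sat R V ψ w
  | .and φ ψ, w => sat R V φ w ∧ sat R V ψ w
  | .dia φ, w => ∃ v, R w v ∧ sat R V φ v
  | .box φ, w => ∀ v, R w v → sat R V φ v
mutual
/-- All occurrences of `p` are under an even number of negations. -/
def positiveIn (p : Nat) : MF → Prop
  | .bot => True
  | .top => True
  | .var _ => True
  | .neg φ => negativeIn p φ
  | .or φ ψ => positiveIn p φ ∧ positiveIn p ψ
  | .and φ ψ => positiveIn p φ ∧ positiveIn p ψ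
  | .dia φ => positiveIn p φ
  | .box φ => positiveIn p φ

/-- All occurrences of `p` are under an odd number of negations. -/
def negativeIn (p : Nat) : MF → Prop
  | .bot => True
  | .top => True
  | .var q => q ≠ p
  | .neg φ => positiveIn p φ
  | .or φ ψ => negativeIn p φ ∧ negativeIn p ψ
  | .and φ ψ => negativeIn p φ ∧ negativeIn p ψ
  | .dia φ => negativeIn p φ
  | .box φ => negativeIn p φ
end
/-- `boxes n φ` is `φ` prefixed with `n` boxes. -/
def boxes : Nat → MF → MF
  | 0, φ => φ
  | n + 1, φ => MF.box (boxes n φ)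

/-- A negative formula: all propositional variables occur under an odd
number of negations. -/
def negativeF (φ : MF) : Prop := ∀ p, negativeIn p φ

/-- A positive formula: all propositional variables occur under an even
number of negations. -/
def positiveF (φ : MF) : Prop := ∀ p, positiveIn p φ

/-- Sahlqvist antecedents: built from `⊤`, `⊥`, boxed atoms, and negative
formulas using `∧`, `∨` and `◇`. -/
inductive SAnt : MF → Prop where
  | top : SAnt MF.top
  | bot : SAnt MF.bot
  | boxedAtom (n p : Nat) : SAnt (boxes n (MF.var p))
  | negf (φ : MF) : negativeF φ → SAnt φ
  | and (φ ψ : MF) : SAnt φ → SAnt ψ → SAnt (MF.and φ ψ)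
  | or (φ ψ : MF) : SAnt φ → SAnt ψ → SAnt (MF.or φ ψ)
  | dia (φ : MF) : SAnt φ → SAnt (MF.dia φ)

/-- Sahlqvist formulas: built from Sahlqvist implications `φ → Pos` (with
`φ` a Sahlqvist antecedent and `Pos` positive) using `∧`, `∨` and `□`. -/
inductive Sahl : MF → Prop where
  | imp (φ ψ : MF) : SAnt φ → positiveF ψ → Sahl (MF.imp φ ψ)
  | and (φ ψ : MF) : Sahl φ → Sahl ψ → Sahl (MF.and φ ψ)
  | or (φ ψ : MF) : Sahl φ → Sahl ψ → Sahl (MF.or φ ψ)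
  | box (φ : MF) : Sahl φ → Sahl (MF.box φ)

/-- `nnfNeg φ` is the result of importing the negation of `φ` inwards over
all connectives (De Morgan, `¬□ψ ↝ ◇¬ψ`, `¬◇ψ ↝ □¬ψ`, `¬¬ψ ↝ ψ`). -/
def nnfNeg : MF → MF
  | .bot => .top
  | .top => .bot
  | .var p => .neg (.var p)
  | .neg φ => φ
  | .or φ ψ => .and (nnfNeg φ) (nnfNeg ψ)
  | .and φ ψ => .or (nnfNeg φ) (nnfNeg ψ)
  | .dia φ => .box (nnfNeg φ)
  | .box φ => .dia (nnfNeg φ)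

/-- Semantic equivalence: truth at the same states of the same models. -/
def semEquiv (φ ψ : MF) : Prop :=
  ∀ (W : Type) (R : W → W → Prop) (V : Nat → Set W) (w : W),
    sat R V φ w ↔ sat R V ψ w

theorem nnf_polarity (φ : MF) (p : Nat) :
    (positiveIn p φ → negativeIn p (nnfNeg φ)) ∧
    (negativeIn p φ → positiveIn p (nnfNeg φ)) := by
  induction φ with
  | bot => simp [nnfNeg, positiveIn, negativeIn]
  | top => simp [nnfNeg, positiveIn, negativeIn]
  | var q => simp [nnfNeg, positiveIn, negativeIn]
  | neg φ ih => simpa [nnfNeg, positiveIn, negativeIn] using ⟨fun h => h, fun h => h⟩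
  | or φ ψ ihφ ihψ =>
      simp only [nnfNeg, positiveIn, negativeIn]
      exact ⟨fun h => ⟨ihφ.1 h.1, ihψ.1 h.2⟩, fun h => ⟨ihφ.2 h.1, ihψ.2 h.2⟩⟩
  | and φ ψ ihφ ihψ =>
      simp only [nnfNeg, positiveIn, negativeIn]
      exact ⟨fun h => ⟨ihφ.1 h.1, ihψ.1 h.2⟩, fun h => ⟨ihφ.2 h.1, ihψ.2 h.2⟩⟩
  | dia φ ih => simpa [nnfNeg, positiveIn, negativeIn] using ih
  | box φ ih => simpa [nnfNeg, positiveIn, negativeIn] using ih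

theorem sat_nnfNeg {W : Type} (R : W → W → Prop) (V : Nat → Set W) (φ : MF) (w : W) :
    sat R V (nnfNeg φ) w ↔ ¬ sat R V φ w := by
  induction φ generalizing w with
  | bot => simp [nnfNeg, sat]
  | top => simp [nnfNeg, sat]
  | var p => simp [nnfNeg, sat]
  | neg φ ih => simp [nnfNeg, sat]
  | or φ ψ ihφ ihψ => simp [nnfNeg, sat, ihφ, ihψ]
  | and φ ψ ihφ ihψ => simp [nnfNeg, sat, ihφ, ihψ]; tauto
  | dia φ ih => simp [nnfNeg, sat, ih]
  | box φ ih => simp [nnfNeg, sat, ih]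

theorem sant_nnfNeg (φ : MF) (h : Sahl φ) : SAnt (nnfNeg φ) := by
  induction h with
  | imp φ ψ hφ hψ =>
      show SAnt (MF.and (nnfNeg (MF.neg φ)) (nnfNeg ψ))
      exact SAnt.and _ _ hφ (SAnt.negf _ (fun p => (nnf_polarity ψ p).1 (hψ p)))
  | and φ ψ _ _ ihφ ihψ => exact SAnt.or _ _ ihφ ihψ
  | or φ ψ _ _ ihφ ihψ => exact SAnt.and _ _ ihφ ihψ
  | box φ _ ih => exact SAnt.dia _ ih

/-- Every Sahlqvist formula is semantically equivalent to the negation of a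
Sahlqvist antecedent, and hence to a Sahlqvist implication. -/
theorem sahlqvist_equiv_neg_antecedent (φ : MF) (h : Sahl φ) :
    (∃ α : MF, SAnt α ∧ semEquiv φ (MF.neg α)) ∧
    (∃ γ : MF, (∃ α β : MF, SAnt α ∧ positiveF β ∧ γ = MF.imp α β) ∧ semEquiv φ γ) := by
  refine ⟨⟨nnfNeg φ, sant_nnfNeg φ h, fun W R V w => ?_⟩,
    ⟨MF.imp (nnfNeg φ) MF.bot, ⟨nnfNeg φ, MF.bot, sant_nnfNeg φ h,
      fun p => trivial, rfl⟩, fun W R V w => ?_⟩⟩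
  · simp [sat, sat_nnfNeg]
  · simp [MF.imp, sat, sat_nnfNeg]
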